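/- Let 𝔐 = (V,⟨·,·⟩,A) be Jacobi–Tsankov and let x, y, w ∈ V satisfy ⟨J(x)J(y)w, w⟩ ≠ 0. Then the fourteen vectors w, x, y, J(x)J(y)w, J(x)w, J(y)w, J(x,y)w, J(y)J(w)x, J(y)x, J(w)x, J(y,w)x, J(w)J(x)y, J(w)y, J(x)y are linearly independent in V; in particular dim V ≥ 14. -/

import Mathlib

/-!
Polarizing `J(u)u = 0` and the commutation `J(u)J(v) = J(v)J(u)` shows that `J(u)² = 0`,
`J(u)J(u,v) = 0`, `J(u,v)² = -½ J(u)J(v)` and `J(u,z)J(u,t) = -½ J(u)J(z,t)`; moreover every Jacobi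
operator is self-adjoint. Hence a composite of Jacobi operators in `x, y, w` applied to one of these
letters, or paired with one of them, vanishes as soon as a letter repeats, while the surviving
pairings are multiples of `ε = ⟨J(x)J(y)w, w⟩`, a quantity invariant under `x ↦ y ↦ w ↦ x`.
Sorting the fourteen vectors into the levels `w, x, y`, the eight single applications, and the three
double applications, and pairing each with a partner of complementary level, gives a matrix that is
triangular with respect to the level and has nonzero multiples of `ε` on the diagonal.
-/

noncomputable section

/-- The Jacobi operator `J(x) : y ↦ 𝒜(y,x)x` of a (tri)linear curvature operator `𝒜`. -/
def jacobiOp {V : Type*} [AddCommGroup V] [Module ℝ V]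
    (Aop : V →ₗ[ℝ] V →ₗ[ℝ] V →ₗ[ℝ] V) (x : V) : V →ₗ[ℝ] V where
  toFun y := Aop y x x
  map_add' y z := by simp
  map_smul' c y := by simp

/-- The polarized Jacobi operator `J(x,y) : z ↦ ½(𝒜(z,x)y + 𝒜(z,y)x)`. -/
def jacobiPol {V : Type*} [AddCommGroup V] [Module ℝ V]
    (Aop : V →ₗ[ℝ] V →ₗ[ℝ] V →ₗ[ℝ] V) (x y : V) : V →ₗ[ℝ] V where
  toFun z := (1/2 : ℝ) • (Aop z x y + Aop z y x)
  map_add' a b := by simp [smul_add]; abel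
  map_smul' c a := by simp [smul_add, smul_comm c]

theorem LinearIndependent.of_dual_triangular {K V ι : Type*} [Field K] [AddCommGroup V]
    [Module K V] [Fintype ι] (v : ι → V) (f : ι → Module.Dual K V) (lev : ι → ℕ)
    (hzero : ∀ i j, i ≠ j → lev j ≤ lev i → f j (v i) = 0) (hdiag : ∀ i, f i (v i) ≠ 0) :
    LinearIndependent K v := by
  rw [Fintype.linearIndependent_iff]
  intro g hg j
  induction h : lev j using Nat.strong_induction_on generalizing j with
  | _ n ih =>
    have hj := congrArg (f j) hg
    rw [map_sum, map_zero, Finset.sum_eq_single j] at hj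
    · simpa [hdiag j] using hj
    · intro i _ hij
      rcases lt_or_ge (lev i) (lev j) with hlt | hle
      · rw [ih _ (h ▸ hlt) i rfl, zero_smul, map_zero]
      · rw [map_smul, hzero i j hij hle, smul_zero]
    · simp

theorem smul_add_sq_smul_add_cube_smul_eq_zero {K M : Type*} [Field K] [CharZero K]
    [AddCommGroup M] [Module K M] {p q r : M}
    (h : ∀ c : K, c • p + c ^ 2 • q + c ^ 3 • r = 0) : p = 0 ∧ q = 0 ∧ r = 0 := by
  have h1 := h 1
  have h2 := h (-1)
  have h3 := h 2
  refine ⟨?_, ?_, ?_⟩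
  · linear_combination (norm := module) h1 - (1 / 3 : K) • h2 - (1 / 6 : K) • h3
  · linear_combination (norm := module) (1 / 2 : K) • h1 + (1 / 2 : K) • h2
  · linear_combination (norm := module)
      (-(1 / 2) : K) • h1 - (1 / 6 : K) • h2 + (1 / 6 : K) • h3

section Polarization

variable {V : Type*} [AddCommGroup V] [Module ℝ V] (Aop : V →ₗ[ℝ] V →ₗ[ℝ] V →ₗ[ℝ] V)

theorem jacobiPol_comm (u v : V) : jacobiPol Aop u v = jacobiPol Aop v u := by
  ext a
  simp [jacobiPol, add_comm]

theorem jacobiOp_add_smul_apply (u v a : V) (c : ℝ) :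
    jacobiOp Aop (u + c • v) a =
      jacobiOp Aop u a + (2 * c) • jacobiPol Aop u v a + c ^ 2 • jacobiOp Aop v a := by
  simp only [jacobiOp, jacobiPol, LinearMap.coe_mk, AddHom.coe_mk, map_add, map_smul,
    LinearMap.add_apply, LinearMap.smul_apply]
  module

theorem jacobiPol_add_smul_left_apply (u z v a : V) (c : ℝ) :
    jacobiPol Aop (u + c • z) v a = jacobiPol Aop u v a + c • jacobiPol Aop z v a := by
  simp only [jacobiPol, LinearMap.coe_mk, AddHom.coe_mk, map_add, map_smul,
    LinearMap.add_apply, LinearMap.smul_apply]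
  module

theorem jacobiPol_isAdjointPair {B : LinearMap.BilinForm ℝ V}
    (hB : ∀ u, B.IsAdjointPair B (jacobiOp Aop u) (jacobiOp Aop u)) (u v : V) :
    B.IsAdjointPair B (jacobiPol Aop u v) (jacobiPol Aop u v) := by
  intro a b
  have h := hB (u + (1 : ℝ) • v) a b
  simp only [jacobiOp_add_smul_apply, map_add, map_smul, LinearMap.add_apply,
    LinearMap.smul_apply, smul_eq_mul] at h
  linear_combination (1 / 2 : ℝ) * h - (1 / 2 : ℝ) * hB u a b - (1 / 2 : ℝ) * hB v a b

end Polarization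

/-- The part of the Jacobi–Tsankov condition that involves `𝒜` alone; the symmetries involving
`⟨·,·⟩` enter separately, through the self-adjointness of the operators `J(u)`. -/
structure IsJacobiTsankov {V : Type*} [AddCommGroup V] [Module ℝ V]
    (Aop : V →ₗ[ℝ] V →ₗ[ℝ] V →ₗ[ℝ] V) : Prop where
  skew : ∀ p q r, Aop p q r = -Aop q p r
  commute : ∀ u v, Commute (jacobiOp Aop u) (jacobiOp Aop v)

namespace IsJacobiTsankov

variable {V : Type*} [AddCommGroup V] [Module ℝ V] {Aop : V →ₗ[ℝ] V →ₗ[ℝ] V →ₗ[ℝ] V}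
  (hA : IsJacobiTsankov Aop)
include hA

theorem apply_self_left (p r : V) : Aop p p r = 0 := by
  have h : (2 : ℝ) • Aop p p r = 0 := by linear_combination (norm := module) hA.skew p p r
  exact (smul_eq_zero.mp h).resolve_left two_ne_zero

theorem jacobiOp_self (u : V) : jacobiOp Aop u u = 0 :=
  hA.apply_self_left u u

theorem jacobiPol_apply_left (u v : V) :
    jacobiPol Aop u v u = -(1 / 2 : ℝ) • jacobiOp Aop u v := by
  simp only [jacobiPol, jacobiOp, LinearMap.coe_mk, AddHom.coe_mk, hA.apply_self_left,
    hA.skew u v u]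
  module

theorem jacobiPol_apply_right (u v : V) :
    jacobiPol Aop u v v = -(1 / 2 : ℝ) • jacobiOp Aop v u := by
  rw [jacobiPol_comm, hA.jacobiPol_apply_left]

theorem jacobiOp_comm_apply (u v a : V) :
    jacobiOp Aop u (jacobiOp Aop v a) = jacobiOp Aop v (jacobiOp Aop u a) :=
  LinearMap.congr_fun (hA.commute u v) a

theorem jacobiPol_jacobiOp_comm (u v z a : V) :
    jacobiPol Aop u v (jacobiOp Aop z a) = jacobiOp Aop z (jacobiPol Aop u v a) := by
  have h := hA.jacobiOp_comm_apply (u + (1 : ℝ) • v) z a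
  simp only [jacobiOp_add_smul_apply, map_add, map_smul] at h
  have h2 : (2 : ℝ) • jacobiPol Aop u v (jacobiOp Aop z a) =
      (2 : ℝ) • jacobiOp Aop z (jacobiPol Aop u v a) := by
    linear_combination (norm := module)
      h - hA.jacobiOp_comm_apply u z a - hA.jacobiOp_comm_apply v z a
  exact smul_right_injective V two_ne_zero h2

/-- `J(u)` is nilpotent of order two: `J(u) a = -2 J(u,a) u`, and `J(u,a)` commutes with `J(u)`,
which kills `u`. -/
theorem jacobiOp_jacobiOp_self (u a : V) : jacobiOp Aop u (jacobiOp Aop u a) = 0 := by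
  have h : jacobiOp Aop u a = (-2 : ℝ) • jacobiPol Aop u a u := by
    rw [hA.jacobiPol_apply_left]
    module
  rw [h, map_smul, ← hA.jacobiPol_jacobiOp_comm, hA.jacobiOp_self, map_zero, smul_zero]

/-- The coefficients of `c`, `c²`, `c³` in `J(u + c v)² a = 0`. -/
theorem jacobiOp_jacobiPol_polarization (u v a : V) :
    jacobiOp Aop u (jacobiPol Aop u v a) = 0 ∧
      (2 : ℝ) • jacobiOp Aop u (jacobiOp Aop v a) +
        (4 : ℝ) • jacobiPol Aop u v (jacobiPol Aop u v a) = 0 ∧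
      jacobiOp Aop v (jacobiPol Aop u v a) = 0 := by
  have h4 : (4 : ℝ) ≠ 0 := by norm_num
  suffices h : ∀ c : ℝ, c • ((4 : ℝ) • jacobiOp Aop u (jacobiPol Aop u v a)) +
      c ^ 2 • ((2 : ℝ) • jacobiOp Aop u (jacobiOp Aop v a) +
        (4 : ℝ) • jacobiPol Aop u v (jacobiPol Aop u v a)) +
      c ^ 3 • ((4 : ℝ) • jacobiOp Aop v (jacobiPol Aop u v a)) = 0 by
    obtain ⟨h1, h2, h3⟩ := smul_add_sq_smul_add_cube_smul_eq_zero h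
    exact ⟨(smul_eq_zero.mp h1).resolve_left h4, h2, (smul_eq_zero.mp h3).resolve_left h4⟩
  intro c
  have h := hA.jacobiOp_jacobiOp_self (u + c • v) a
  simp only [jacobiOp_add_smul_apply, map_add, map_smul] at h
  linear_combination (norm := module) h - hA.jacobiOp_jacobiOp_self u a
    - (c ^ 4) • hA.jacobiOp_jacobiOp_self v a
    - (2 * c) • hA.jacobiPol_jacobiOp_comm u v u a
    - (2 * c ^ 3) • hA.jacobiPol_jacobiOp_comm u v v a
    - (c ^ 2) • hA.jacobiOp_comm_apply v u a

theorem jacobiOp_jacobiPol_left (u v a : V) : jacobiOp Aop u (jacobiPol Aop u v a) = 0 :=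
  (hA.jacobiOp_jacobiPol_polarization u v a).1

theorem jacobiOp_jacobiPol_right (u v a : V) : jacobiOp Aop v (jacobiPol Aop u v a) = 0 :=
  (hA.jacobiOp_jacobiPol_polarization u v a).2.2

theorem jacobiPol_jacobiPol_self (u v a : V) :
    jacobiPol Aop u v (jacobiPol Aop u v a) =
      -(1 / 2 : ℝ) • jacobiOp Aop u (jacobiOp Aop v a) := by
  linear_combination (norm := module)
    (1 / 4 : ℝ) • (hA.jacobiOp_jacobiPol_polarization u v a).2.1

theorem jacobiPol_jacobiPol_left (u z t a : V) :
    jacobiPol Aop u z (jacobiPol Aop u t a) =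
      -(1 / 2 : ℝ) • jacobiOp Aop u (jacobiPol Aop z t a) := by
  have e : ∀ c : ℝ, jacobiOp Aop (u + c • z) (jacobiPol Aop (u + c • z) t a) = 0 :=
    fun c => hA.jacobiOp_jacobiPol_left (u + c • z) t a
  have e1 := e 1
  have e2 := e (-1)
  simp only [jacobiPol_add_smul_left_apply, jacobiOp_add_smul_apply, map_add, map_smul] at e1 e2
  linear_combination (norm := module) (1 / 4 : ℝ) • e1 - (1 / 4 : ℝ) • e2
    - (1 / 2 : ℝ) • hA.jacobiOp_jacobiPol_left z t a

theorem jacobiPol_jacobiPol_apply (u v t : V) :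
    jacobiPol Aop u v (jacobiPol Aop v t u) =
      (1 / 4 : ℝ) • jacobiOp Aop v (jacobiOp Aop u t) := by
  rw [jacobiPol_comm Aop u v, hA.jacobiPol_jacobiPol_left, hA.jacobiPol_apply_left, map_smul,
    smul_smul]
  norm_num

theorem jacobiPol_jacobiPol_apply' (u v t : V) :
    jacobiPol Aop v t (jacobiPol Aop u v t) =
      (1 / 4 : ℝ) • jacobiOp Aop v (jacobiOp Aop t u) := by
  rw [jacobiPol_comm Aop v t, jacobiPol_comm Aop u v]
  exact hA.jacobiPol_jacobiPol_apply t v u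

theorem jacobiOp_jacobiOp_apply_self (u v : V) : jacobiOp Aop u (jacobiOp Aop v u) = 0 := by
  rw [hA.jacobiOp_comm_apply, hA.jacobiOp_self, map_zero]

theorem jacobiOp_jacobiOp_jacobiOp_apply_self (u v t : V) :
    jacobiOp Aop u (jacobiOp Aop v (jacobiOp Aop t u)) = 0 := by
  rw [hA.jacobiOp_comm_apply, hA.jacobiOp_jacobiOp_apply_self, map_zero]

theorem jacobiOp_jacobiPol_apply_self (u v t : V) : jacobiOp Aop t (jacobiPol Aop u v t) = 0 := by
  rw [← hA.jacobiPol_jacobiOp_comm, hA.jacobiOp_self, map_zero]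

section Bilinear

variable {B : LinearMap.BilinForm ℝ V}
  (hB : ∀ u, B.IsAdjointPair B (jacobiOp Aop u) (jacobiOp Aop u))
include hB

theorem bilin_jacobiOp_self (u a : V) : B u (jacobiOp Aop u a) = 0 := by
  rw [← hB, hA.jacobiOp_self, map_zero, LinearMap.zero_apply]

theorem bilin_jacobiOp_jacobiOp_self (u v a : V) :
    B u (jacobiOp Aop v (jacobiOp Aop u a)) = 0 := by
  rw [hA.jacobiOp_comm_apply, hA.bilin_jacobiOp_self hB]

/-- Both sides are `4 ⟨J(x,y)w, J(y,w)x⟩`. -/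
theorem bilin_jacobiOp_jacobiOp_cycle (x y w : V) :
    B x (jacobiOp Aop y (jacobiOp Aop w x)) = B w (jacobiOp Aop x (jacobiOp Aop y w)) := by
  have h := jacobiPol_isAdjointPair Aop hB y w (jacobiPol Aop x y w) x
  rw [jacobiPol_isAdjointPair Aop hB x y w, hA.jacobiPol_jacobiPol_apply,
    hA.jacobiPol_jacobiPol_apply', map_smul, map_smul, LinearMap.smul_apply, hB, hB,
    hA.jacobiOp_comm_apply w y, hA.jacobiOp_comm_apply y x] at h
  simpa using h

end Bilinear

end IsJacobiTsankov

section CurvatureTensor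

variable {V : Type*} [AddCommGroup V] [Module ℝ V] {B : LinearMap.BilinForm ℝ V}
  {Aop : V →ₗ[ℝ] V →ₗ[ℝ] V →ₗ[ℝ] V}

theorem apply_skew_of_bilin (hBnd : ∀ x : V, (∀ y : V, B x y = 0) → x = 0)
    (hA1 : ∀ x y z w : V, B (Aop x y z) w = - B (Aop y x z) w) (p q r : V) :
    Aop p q r = -Aop q p r := by
  refine eq_neg_of_add_eq_zero_left (hBnd _ fun s => ?_)
  rw [map_add, LinearMap.add_apply, hA1 p q r s, neg_add_cancel]

theorem jacobiOp_isAdjointPair (hBsymm : ∀ x y : V, B x y = B y x)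
    (hA1 : ∀ x y z w : V, B (Aop x y z) w = - B (Aop y x z) w)
    (hA2 : ∀ x y z w : V, B (Aop x y z) w = B (Aop z w x) y) (u : V) :
    B.IsAdjointPair B (jacobiOp Aop u) (jacobiOp Aop u) := by
  intro a b
  change B (Aop a u u) b = B a (Aop b u u)
  rw [hBsymm a, hA2 a u u b, hA1 u b a u, hA2 b u a u, hA1 a u b u, neg_neg, hA2 u a b u]

end CurvatureTensor

section Fourteen

variable {V : Type*} [AddCommGroup V] [Module ℝ V]

def fourteenVectors (Aop : V →ₗ[ℝ] V →ₗ[ℝ] V →ₗ[ℝ] V) (x y w : V) : Fin 14 → V :=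
  ![w, x, y,
    jacobiOp Aop x (jacobiOp Aop y w), jacobiOp Aop x w, jacobiOp Aop y w,
    jacobiPol Aop x y w,
    jacobiOp Aop y (jacobiOp Aop w x), jacobiOp Aop y x, jacobiOp Aop w x,
    jacobiPol Aop y w x,
    jacobiOp Aop w (jacobiOp Aop x y), jacobiOp Aop w y, jacobiOp Aop x y]

def fourteenLevel : Fin 14 → ℕ := ![0, 0, 0, 2, 1, 1, 1, 2, 1, 1, 1, 2, 1, 1]

/-- Each vector is tested against a partner of complementary level (`w ↔ J(x)J(y)w`,
`J(x)w ↔ J(y)w`, …). The Gram block of `J(x,y)w, J(y,w)x` is `ε [[-1/2, 1/4], [1/4, -1/2]]`,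
so their partners are the combinations `2 J(x,y)w + J(y,w)x` and `J(x,y)w + 2 J(y,w)x`
that diagonalize it. -/
def fourteenDual (B : LinearMap.BilinForm ℝ V) (Aop : V →ₗ[ℝ] V →ₗ[ℝ] V →ₗ[ℝ] V) (x y w : V) :
    Fin 14 → Module.Dual ℝ V :=
  ![(B w).comp (jacobiOp Aop x ∘ₗ jacobiOp Aop y),
    (B x).comp (jacobiOp Aop y ∘ₗ jacobiOp Aop w),
    (B y).comp (jacobiOp Aop w ∘ₗ jacobiOp Aop x),
    B w, (B w).comp (jacobiOp Aop y), (B w).comp (jacobiOp Aop x),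
    (2 : ℝ) • (B w).comp (jacobiPol Aop x y) + (B x).comp (jacobiPol Aop y w),
    B x, (B x).comp (jacobiOp Aop w), (B x).comp (jacobiOp Aop y),
    (B w).comp (jacobiPol Aop x y) + (2 : ℝ) • (B x).comp (jacobiPol Aop y w),
    B y, (B y).comp (jacobiOp Aop x), (B y).comp (jacobiOp Aop w)]

variable {B : LinearMap.BilinForm ℝ V} {Aop : V →ₗ[ℝ] V →ₗ[ℝ] V →ₗ[ℝ] V}

theorem IsJacobiTsankov.fourteenDual_apply_eq_zero (hA : IsJacobiTsankov Aop)
    (hB : ∀ u, B.IsAdjointPair B (jacobiOp Aop u) (jacobiOp Aop u)) (x y w : V) (i j : Fin 14)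
    (hij : i ≠ j) (hle : fourteenLevel j ≤ fourteenLevel i) :
    fourteenDual B Aop x y w j (fourteenVectors Aop x y w i) = 0 := by
  fin_cases i <;> fin_cases j <;>
    simp [fourteenLevel, fourteenDual, fourteenVectors, hA.jacobiOp_comm_apply, hA.jacobiOp_self,
      hA.jacobiOp_jacobiOp_self, hA.jacobiOp_jacobiOp_apply_self,
      hA.jacobiOp_jacobiOp_jacobiOp_apply_self, hA.jacobiOp_jacobiPol_apply_self,
      hA.jacobiOp_jacobiPol_left, hA.jacobiOp_jacobiPol_right, hA.jacobiPol_jacobiOp_comm,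
      hA.jacobiPol_apply_left, hA.jacobiPol_apply_right, hA.jacobiPol_jacobiPol_self,
      hA.jacobiPol_jacobiPol_apply, hA.jacobiPol_jacobiPol_apply',
      hA.bilin_jacobiOp_self hB, hA.bilin_jacobiOp_jacobiOp_self hB,
      hA.bilin_jacobiOp_jacobiOp_cycle hB x y w] at hij hle ⊢ <;> ring

theorem IsJacobiTsankov.fourteenDual_apply_self (hA : IsJacobiTsankov Aop)
    (hB : ∀ u, B.IsAdjointPair B (jacobiOp Aop u) (jacobiOp Aop u)) (x y w : V)
    (hε : B w (jacobiOp Aop x (jacobiOp Aop y w)) ≠ 0) (i : Fin 14) :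
    fourteenDual B Aop x y w i (fourteenVectors Aop x y w i) ≠ 0 := by
  have hεx := hA.bilin_jacobiOp_jacobiOp_cycle hB x y w
  have hεy :
      B y (jacobiOp Aop x (jacobiOp Aop w y)) = B w (jacobiOp Aop x (jacobiOp Aop y w)) := by
    rw [hA.jacobiOp_comm_apply x w, hA.bilin_jacobiOp_jacobiOp_cycle hB y w x, hεx]
  fin_cases i <;>
    simp [fourteenDual, fourteenVectors, hA.jacobiOp_comm_apply, hA.jacobiPol_jacobiPol_self,
      hA.jacobiPol_jacobiPol_apply, hA.jacobiPol_jacobiPol_apply', hεx, hεy, hε]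
  all_goals
    intro h
    exact hε (by linarith)

theorem IsJacobiTsankov.linearIndependent_fourteenVectors (hA : IsJacobiTsankov Aop)
    (hB : ∀ u, B.IsAdjointPair B (jacobiOp Aop u) (jacobiOp Aop u)) (x y w : V)
    (hε : B w (jacobiOp Aop x (jacobiOp Aop y w)) ≠ 0) :
    LinearIndependent ℝ (fourteenVectors Aop x y w) :=
  .of_dual_triangular _ (fourteenDual B Aop x y w) fourteenLevel
    (hA.fourteenDual_apply_eq_zero hB x y w) (hA.fourteenDual_apply_self hB x y w hε)

end Fourteen

theorem jacobiTsankov_fourteen_independent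
    {V : Type*} [AddCommGroup V] [Module ℝ V] [FiniteDimensional ℝ V]
    -- a nondegenerate symmetric bilinear form ⟨·,·⟩ on V
    (B : LinearMap.BilinForm ℝ V)
    (hBsymm : ∀ x y : V, B x y = B y x)
    (hBnd : ∀ x : V, (∀ y : V, B x y = 0) → x = 0)
    -- the curvature operator 𝒜, with `A x y z w = ⟨𝒜(x,y)z, w⟩`
    (Aop : V →ₗ[ℝ] V →ₗ[ℝ] V →ₗ[ℝ] V)
    -- A(x,y,z,w) = -A(y,x,z,w)
    (hA1 : ∀ x y z w : V, B (Aop x y z) w = - B (Aop y x z) w)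
    -- A(x,y,z,w) = A(z,w,x,y)
    (hA2 : ∀ x y z w : V, B (Aop x y z) w = B (Aop z w x) y)
    -- 𝔐 is Jacobi–Tsankov
    (hJT : ∀ x y : V, jacobiOp Aop x ∘ₗ jacobiOp Aop y = jacobiOp Aop y ∘ₗ jacobiOp Aop x)
    (x y w : V) (hw : B (jacobiOp Aop x (jacobiOp Aop y w)) w ≠ 0) :
    LinearIndependent ℝ
      ![w, x, y,
        jacobiOp Aop x (jacobiOp Aop y w), jacobiOp Aop x w, jacobiOp Aop y w,
        jacobiPol Aop x y w,
        jacobiOp Aop y (jacobiOp Aop w x), jacobiOp Aop y x, jacobiOp Aop w x,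
        jacobiPol Aop y w x,
        jacobiOp Aop w (jacobiOp Aop x y), jacobiOp Aop w y, jacobiOp Aop x y] ∧
    14 ≤ Module.finrank ℝ V := by
  have hA : IsJacobiTsankov Aop := ⟨apply_skew_of_bilin hBnd hA1, hJT⟩
  have hli : LinearIndependent ℝ (fourteenVectors Aop x y w) :=
    hA.linearIndependent_fourteenVectors (jacobiOp_isAdjointPair hBsymm hA1 hA2) x y w
      (by rwa [hBsymm])
  exact ⟨hli, by simpa using hli.fintype_card_le_finrank⟩
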